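/- Ergodic averaging of the vertical integral: let q : ℝ → ℝ be measurable with c₁ ≤ q ≤ c₂ for constants 0 < c₁ ≤ c₂, suppose the Cesàro averages (1/T)∫_0^T q²(s) ds converge to a limit ⟨q²⟩ as T → ∞, and let 0 < θ. Then for every h > 0 and every continuous function g : [−h, 0] → ℝ, lim_{ε→0} ∫_{−h}^0 g(x₃) q²(−ε^{−θ} x₃) dx₃ = ⟨q²⟩ ∫_{−h}^0 g(x₃) dx₃. -/

import Mathlib

/-!
Substituting `s = -L x` turns `∫_a^b q²(-L x) dx` into a difference of Cesàro averages of
`q²`, so as `L = ε^{-θ} → ∞` these integrals tend to `⟨q²⟩ (b - a)` for every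
`[a, b] ⊆ [-h, 0]`. Because the weights `q²(-L ·)` are uniformly bounded, this passes to
continuous `g`: on pieces where `g` oscillates by at most `η`, replacing `g` by a constant
costs `O(η)` times the length of the piece, and these errors add up to `O(η h)`.
-/

open Set Filter intervalIntegral
open MeasureTheory (volume ae_of_all)
open Topology

theorem Measurable.intervalIntegrable_of_abs_le {ψ : ℝ → ℝ} {M : ℝ} (hψ : Measurable ψ)
    (hM : ∀ x, |ψ x| ≤ M) (a b : ℝ) : IntervalIntegrable ψ volume a b :=
  intervalIntegrable_const.mono_fun' hψ.aestronglyMeasurable (ae_of_all _ hM)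

section Cesaro

variable {φ : ℝ → ℝ} {A : ℝ}

theorem tendsto_inv_mul_integral_of_cesaro
    (hφ : Tendsto (fun T : ℝ => (1 / T) * ∫ s in (0 : ℝ)..T, φ s) atTop (𝓝 A))
    {c : ℝ} (hc : 0 ≤ c) :
    Tendsto (fun L : ℝ => L⁻¹ * ∫ s in (0 : ℝ)..L * c, φ s) atTop (𝓝 (A * c)) := by
  rcases hc.eq_or_lt with rfl | hc
  · simp
  refine ((hφ.comp (tendsto_id.atTop_mul_const hc)).mul_const c).congr' ?_
  filter_upwards [eventually_gt_atTop 0] with L hL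
  simp only [Function.comp_apply, id]
  field_simp

theorem tendsto_integral_comp_neg_mul_of_cesaro
    (hφi : ∀ a b, IntervalIntegrable φ volume a b)
    (hφ : Tendsto (fun T : ℝ => (1 / T) * ∫ s in (0 : ℝ)..T, φ s) atTop (𝓝 A))
    {a b : ℝ} (hab : a ≤ b) (hb : b ≤ 0) :
    Tendsto (fun L : ℝ => ∫ x in a..b, φ (-L * x)) atTop (𝓝 (A * (b - a))) := by
  have h := (tendsto_inv_mul_integral_of_cesaro hφ (c := -a) (by linarith)).sub
    (tendsto_inv_mul_integral_of_cesaro hφ (c := -b) (by linarith))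
  rw [show A * (b - a) = A * -a - A * -b by ring]
  refine h.congr' ?_
  filter_upwards [eventually_gt_atTop 0] with L hL
  rw [← mul_sub, integral_interval_sub_left (hφi _ _) (hφi _ _),
    integral_comp_mul_left (fun x => φ x) (neg_ne_zero.2 hL.ne'), integral_symm, smul_eq_mul]
  simp only [neg_mul, mul_neg, inv_neg]

end Cesaro

theorem eventually_abs_le_of_local_of_additive {ι : Type*} {l : Filter ι}
    {E : ι → ℝ → ℝ → ℝ} {u v K δ : ℝ} (huv : u ≤ v) (hδ : 0 < δ)
    (hadd : ∀ i a b, u ≤ a → a ≤ b → b ≤ v → E i a v = E i a b + E i b v)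
    (hloc : ∀ a b, u ≤ a → a ≤ b → b ≤ v → b - a ≤ δ →
      ∀ᶠ i in l, |E i a b| ≤ K * (b - a)) :
    ∀ᶠ i in l, |E i u v| ≤ K * (v - u) := by
  have key : ∀ n : ℕ, ∀ a, u ≤ a → a ≤ v → v - a ≤ n * δ →
      ∀ᶠ i in l, |E i a v| ≤ K * (v - a) := by
    intro n
    induction n with
    | zero =>
      intro a hua hav hn
      refine hloc a v hua hav le_rfl ?_
      simp only [Nat.cast_zero, zero_mul] at hn
      linarith
    | succ n ih =>
      intro a hua hav hn
      by_cases hnear : v - a ≤ δ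
      · exact hloc a v hua hav le_rfl hnear
      have hb : a + δ ≤ v := by linarith
      filter_upwards [hloc a (a + δ) hua (by linarith) hb (by simp),
        ih (a + δ) (by linarith) hb (by push_cast at hn; linarith)] with i hnear hfar
      rw [hadd i a (a + δ) hua (by linarith) hb]
      calc |E i a (a + δ) + E i (a + δ) v|
          ≤ |E i a (a + δ)| + |E i (a + δ) v| := abs_add_le _ _
        _ ≤ K * (a + δ - a) + K * (v - (a + δ)) := add_le_add hnear hfar
        _ = K * (v - a) := by ring
  obtain ⟨n, hn⟩ := exists_nat_ge ((v - u) / δ)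
  exact key n u le_rfl huv (by rwa [div_le_iff₀ hδ] at hn)

theorem abs_integral_mul_sub_le {f g : ℝ → ℝ} {a b A C η : ℝ} (hab : a ≤ b)
    (hf : IntervalIntegrable f volume a b) (hfC : ∀ x ∈ Icc a b, |f x| ≤ C)
    (hg : ContinuousOn g (Icc a b)) (hosc : ∀ x ∈ Icc a b, |g x - g a| ≤ η) :
    |(∫ x in a..b, g x * f x) - A * ∫ x in a..b, g x|
      ≤ (C + |A|) * η * (b - a) + |g a| * |(∫ x in a..b, f x) - A * (b - a)| := by
  have hg' : ContinuousOn g (uIcc a b) := by rwa [uIcc_of_le hab]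
  have hgi : IntervalIntegrable g volume a b := hg'.intervalIntegrable
  have hmem : ∀ x ∈ uIoc a b, x ∈ Icc a b := fun x hx =>
    Ioc_subset_Icc_self (by rwa [uIoc_of_le hab] at hx)
  have hη : 0 ≤ η := by simpa using hosc a (left_mem_Icc.2 hab)
  have hsplit : (∫ x in a..b, g x * f x) - A * ∫ x in a..b, g x
      = (∫ x in a..b, (g x - g a) * f x) + g a * ((∫ x in a..b, f x) - A * (b - a))
        + A * ∫ x in a..b, (g a - g x) := by
    simp only [sub_mul]
    rw [integral_sub (hf.continuousOn_mul hg') (hf.const_mul _),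
      integral_sub intervalIntegrable_const hgi, integral_const_mul, integral_const, smul_eq_mul]
    ring
  have hba : |b - a| = b - a := abs_of_nonneg (sub_nonneg.2 hab)
  have hfirst : |∫ x in a..b, (g x - g a) * f x| ≤ η * C * (b - a) :=
    hba ▸ norm_integral_le_of_norm_le_const (C := η * C) fun x hx => by
      rw [Real.norm_eq_abs, abs_mul]
      exact mul_le_mul (hosc x (hmem x hx)) (hfC x (hmem x hx)) (abs_nonneg _) hη
  have hlast : |∫ x in a..b, (g a - g x)| ≤ η * (b - a) :=
    hba ▸ norm_integral_le_of_norm_le_const (C := η) fun x hx => by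
      rw [Real.norm_eq_abs, abs_sub_comm]
      exact hosc x (hmem x hx)
  rw [hsplit]
  calc _ ≤ |∫ x in a..b, (g x - g a) * f x| + |g a * ((∫ x in a..b, f x) - A * (b - a))|
        + |A * ∫ x in a..b, (g a - g x)| := abs_add_three _ _ _
    _ ≤ η * C * (b - a) + |g a| * |(∫ x in a..b, f x) - A * (b - a)|
        + |A| * (η * (b - a)) := by
        rw [abs_mul, abs_mul]
        gcongr
    _ = _ := by ring

section Averaging

variable {ι : Type*} {l : Filter ι} {f : ι → ℝ → ℝ} {g : ℝ → ℝ} {A C u v : ℝ}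

theorem eventually_abs_integral_mul_sub_le (huv : u ≤ v)
    (hf : ∀ i, IntervalIntegrable (f i) volume u v)
    (hfC : ∀ i, ∀ x ∈ Icc u v, |f i x| ≤ C)
    (hlim : ∀ a b, u ≤ a → a ≤ b → b ≤ v →
      Tendsto (fun i => ∫ x in a..b, f i x) l (𝓝 (A * (b - a))))
    (hg : ContinuousOn g (Icc u v)) {η : ℝ} (hη : 0 < η) :
    ∀ᶠ i in l, |(∫ x in u..v, g x * f i x) - A * ∫ x in u..v, g x|
      ≤ (C + |A| + 1) * η * (v - u) := by
  obtain ⟨δ, hδ, hδg⟩ := Metric.uniformContinuousOn_iff.1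
    (isCompact_Icc.uniformContinuousOn_of_continuous hg) η hη
  have hfi : ∀ i a b, u ≤ a → a ≤ b → b ≤ v → IntervalIntegrable (f i) volume a b :=
    fun i a b hua hab hbv => (hf i).mono_set <| by
      rw [uIcc_of_le hab, uIcc_of_le huv]; exact Icc_subset_Icc hua hbv
  have hgi : ∀ a b, u ≤ a → a ≤ b → b ≤ v → IntervalIntegrable g volume a b :=
    fun a b hua hab hbv => ContinuousOn.intervalIntegrable <| by
      rw [uIcc_of_le hab]; exact hg.mono (Icc_subset_Icc hua hbv)
  have hgfi : ∀ i a b, u ≤ a → a ≤ b → b ≤ v →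
      IntervalIntegrable (fun x => g x * f i x) volume a b :=
    fun i a b hua hab hbv => (hfi i a b hua hab hbv).continuousOn_mul <| by
      rw [uIcc_of_le hab]; exact hg.mono (Icc_subset_Icc hua hbv)
  refine eventually_abs_le_of_local_of_additive
    (E := fun i a b => (∫ x in a..b, g x * f i x) - A * ∫ x in a..b, g x)
    huv (half_pos hδ) (fun i a b hua hab hbv => ?_) (fun a b hua hab hbv hba => ?_)
  · rw [← integral_add_adjacent_intervals (hgfi i a b hua hab hbv)
        (hgfi i b v (hua.trans hab) hbv le_rfl),
      ← integral_add_adjacent_intervals (hgi a b hua hab hbv)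
        (hgi b v (hua.trans hab) hbv le_rfl)]
    ring
  rcases hab.eq_or_lt with rfl | hlt
  · exact Eventually.of_forall fun i => by simp
  have hosc : ∀ x ∈ Icc a b, |g x - g a| ≤ η := fun x hx =>
    (hδg x (Icc_subset_Icc hua hbv hx) a (Icc_subset_Icc hua hbv (left_mem_Icc.2 hab)) <| by
      rw [Real.dist_eq, abs_of_nonneg (sub_nonneg.2 hx.1)]; linarith [hx.2]).le
  have hdefect : Tendsto (fun i => |g a| * |(∫ x in a..b, f i x) - A * (b - a)|) l (𝓝 0) := by
    simpa using ((hlim a b hua hab hbv).sub_const (A * (b - a))).abs.const_mul |g a|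
  filter_upwards [hdefect.eventually (gt_mem_nhds (mul_pos hη (sub_pos.2 hlt)))]
    with i hi
  have := abs_integral_mul_sub_le (A := A) hab (hfi i a b hua hab hbv)
    (fun x hx => hfC i x (Icc_subset_Icc hua hbv hx)) (hg.mono (Icc_subset_Icc hua hbv)) hosc
  linarith

theorem tendsto_integral_mul_of_tendsto_integral (huv : u ≤ v)
    (hf : ∀ i, IntervalIntegrable (f i) volume u v)
    (hfC : ∀ i, ∀ x ∈ Icc u v, |f i x| ≤ C)
    (hlim : ∀ a b, u ≤ a → a ≤ b → b ≤ v →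
      Tendsto (fun i => ∫ x in a..b, f i x) l (𝓝 (A * (b - a))))
    (hg : ContinuousOn g (Icc u v)) :
    Tendsto (fun i => ∫ x in u..v, g x * f i x) l (𝓝 (A * ∫ x in u..v, g x)) := by
  rw [Metric.tendsto_nhds]
  intro ε hε
  set M := (C + |A| + 1) * (v - u)
  have hM : M * (ε / (|M| + 1)) < ε :=
    calc M * (ε / (|M| + 1)) ≤ |M| * (ε / (|M| + 1)) := by gcongr; exact le_abs_self M
      _ < (|M| + 1) * (ε / (|M| + 1)) := by gcongr; linarith
      _ = ε := mul_div_cancel₀ _ (by positivity)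
  filter_upwards [eventually_abs_integral_mul_sub_le huv hf hfC hlim hg
    (by positivity : 0 < ε / (|M| + 1))] with i hi
  rw [Real.dist_eq]
  linarith

end Averaging

theorem ergodic_vertical_averaging_general (q : ℝ → ℝ) (c₁ c₂ A θ h : ℝ)
    (hqm : Measurable q)
    (hbd : ∀ s, c₁ ≤ q s ∧ q s ≤ c₂)
    (hcesaro : Tendsto (fun T : ℝ => (1 / T) * ∫ s in (0 : ℝ)..T, q s ^ 2)
      atTop (nhds A))
    (hθ : 0 < θ) (hh : 0 < h)
    (g : ℝ → ℝ) (hg : ContinuousOn g (Icc (-h) 0)) :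
    Tendsto (fun ε : ℝ => ∫ x in (-h)..(0 : ℝ), g x * q (-(ε ^ (-θ)) * x) ^ 2)
      (nhdsWithin 0 (Ioi 0))
      (nhds (A * ∫ x in (-h)..(0 : ℝ), g x)) := by
  have hsq : ∀ s, |q s ^ 2| ≤ max |c₁| |c₂| ^ 2 := fun s => by
    rw [abs_pow]
    exact pow_le_pow_left₀ (abs_nonneg _) (abs_le_max_abs_abs (hbd s).1 (hbd s).2) 2
  have hsqm : Measurable fun s => q s ^ 2 := hqm.pow_const 2
  have hscaled : Tendsto (fun L : ℝ => ∫ x in (-h)..(0 : ℝ), g x * q (-L * x) ^ 2) atTop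
      (𝓝 (A * ∫ x in (-h)..(0 : ℝ), g x)) :=
    tendsto_integral_mul_of_tendsto_integral (neg_nonpos.2 hh.le)
      (fun L => (hsqm.comp (measurable_const_mul (-L))).intervalIntegrable_of_abs_le
        (fun x => hsq _) _ _)
      (fun _ _ _ => hsq _)
      (fun _ _ _ hab hb => tendsto_integral_comp_neg_mul_of_cesaro
        (hsqm.intervalIntegrable_of_abs_le hsq) hcesaro hab hb)
      hg
  exact hscaled.comp (tendsto_rpow_neg_nhdsGT_zero (neg_neg_of_pos hθ))

/-- ergodic averaging of the vertical integral: if the Cesàro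
averages of `q²` converge to `⟨q²⟩`, then
`∫_{−h}^0 g(x₃) q²(−ε^{−θ}x₃) dx₃ → ⟨q²⟩ ∫_{−h}^0 g`. -/
theorem ergodic_vertical_averaging (q : ℝ → ℝ) (c₁ c₂ A θ h : ℝ)
    (hqm : Measurable q) (hc₁ : 0 < c₁) (hc : c₁ ≤ c₂)
    (hbd : ∀ s, c₁ ≤ q s ∧ q s ≤ c₂)
    (hcesaro : Tendsto (fun T : ℝ => (1 / T) * ∫ s in (0 : ℝ)..T, q s ^ 2)
      atTop (nhds A))
    (hθ : 0 < θ) (hh : 0 < h)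
    (g : ℝ → ℝ) (hg : ContinuousOn g (Icc (-h) 0)) :
    Tendsto (fun ε : ℝ => ∫ x in (-h)..(0 : ℝ), g x * q (-(ε ^ (-θ)) * x) ^ 2)
      (nhdsWithin 0 (Ioi 0))
      (nhds (A * ∫ x in (-h)..(0 : ℝ), g x)) :=
  ergodic_vertical_averaging_general q c₁ c₂ A θ h hqm hbd hcesaro hθ hh g hg
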